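/- The regularized kernel factor s₂(r)/r³ extends smoothly through the origin: there exists a C^∞ function g : ℝ → ℝ such that g(r) = s₂(r)/r³ for all r ≠ 0, and necessarily g(0) = 32/(3√π). -/

import Mathlib

open Real Filter Topology

/-- The error function erf(r) = (2/√π)·∫₀ʳ exp(−t²) dt. -/
noncomputable def erf (r : ℝ) : ℝ := (2 / Real.sqrt π) * ∫ t in (0 : ℝ)..r, Real.exp (-t ^ 2)

/-- The first smoothing factor s₁. -/
noncomputable def s₁ (r : ℝ) : ℝ :=
  erf r - (2 / 3) * r * (2 * r ^ 2 - 5) * Real.exp (-r ^ 2) / Real.sqrt π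

/-- The second smoothing factor s₂. -/
noncomputable def s₂ (r : ℝ) : ℝ :=
  erf r - (2 / 3) * r * (4 * r ^ 4 - 14 * r ^ 2 + 3) * Real.exp (-r ^ 2) / Real.sqrt π

/-!
Since erf' = (2/√π)·exp(−r²), one computes s₂'(r) = r²·q₂(r) with q₂ smooth, and s₂(0) = 0,
so s₂(r) = r³·∫₀¹ t²·q₂(rt) dt. Differentiating under the integral sign turns
x ↦ ∫₀¹ tⁿ·q(xt) dt into an integral of the same shape, with q' and n + 1, so such integrals are
smooth; at r = 0 the integral is q₂(0)/3 = 32/(3√π).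
-/

open intervalIntegral Metric
open scoped ContDiff

noncomputable def radialMoment (q : ℝ → ℝ) (n : ℕ) (x : ℝ) : ℝ :=
  ∫ t in (0 : ℝ)..1, t ^ n * q (x * t)

lemma hasDerivAt_radialMoment {q : ℝ → ℝ} (hq : ContDiff ℝ 1 q) (n : ℕ) (x₀ : ℝ) :
    HasDerivAt (radialMoment q n) (radialMoment (deriv q) (n + 1) x₀) x₀ := by
  obtain ⟨C, hC⟩ := (isCompact_closedBall (0 : ℝ) (|x₀| + 1)).exists_bound_of_continuousOn
    hq.continuous_deriv_one.continuousOn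
  have hq_diff : Differentiable ℝ q := hq.differentiable one_ne_zero
  refine (hasDerivAt_integral_of_dominated_loc_of_deriv_le (F := fun x t => t ^ n * q (x * t))
    (F' := fun x t => t ^ (n + 1) * deriv q (x * t)) (μ := MeasureTheory.volume)
    (bound := fun _ => C) (ball_mem_nhds x₀ one_pos) (Eventually.of_forall fun x => ?_) ?_ ?_ ?_
    intervalIntegrable_const ?_).2
  · exact (by fun_prop : Continuous fun t => t ^ n * q (x * t)).aestronglyMeasurable
  · exact (by fun_prop : Continuous fun t => t ^ n * q (x₀ * t)).intervalIntegrable 0 1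
  · exact (by fun_prop : Continuous fun t => t ^ (n + 1) * deriv q (x₀ * t)).aestronglyMeasurable
  · refine MeasureTheory.ae_of_all _ fun t ht x hx => ?_
    rw [Set.uIoc_of_le zero_le_one] at ht
    have hxt : x * t ∈ closedBall (0 : ℝ) (|x₀| + 1) := by
      rw [mem_closedBall_zero_iff, Real.norm_eq_abs, abs_mul, abs_of_nonneg ht.1.le]
      rw [mem_ball, Real.dist_eq] at hx
      nlinarith [abs_sub_abs_le_abs_sub x x₀, abs_nonneg x, ht.2]
    calc ‖t ^ (n + 1) * deriv q (x * t)‖ ≤ 1 * C := by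
          rw [norm_mul]
          gcongr
          · rw [norm_pow, Real.norm_of_nonneg ht.1.le]
            exact pow_le_one₀ ht.1.le ht.2
          · exact hC _ hxt
      _ = C := one_mul C
  · refine MeasureTheory.ae_of_all _ fun t _ x _ => ?_
    exact (((hq_diff (x * t)).hasDerivAt.comp x (hasDerivAt_mul_const t)).const_mul
      (t ^ n)).congr_deriv (by ring)

lemma contDiff_radialMoment {q : ℝ → ℝ} (hq : ContDiff ℝ ∞ q) (n : ℕ) :
    ContDiff ℝ ∞ (radialMoment q n) := by
  rw [contDiff_infty]
  intro k
  induction k generalizing q n with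
  | zero =>
    exact contDiff_zero.2 (continuous_iff_continuousAt.2 fun x =>
      (hasDerivAt_radialMoment (hq.of_le (by simp)) n x).continuousAt)
  | succ k ih =>
    have hq₁ : ContDiff ℝ 1 q := hq.of_le (by simp)
    have hderiv : deriv (radialMoment q n) = radialMoment (deriv q) (n + 1) :=
      funext fun x => (hasDerivAt_radialMoment hq₁ n x).deriv
    refine contDiff_succ_iff_deriv (n := k).2
      ⟨fun x => (hasDerivAt_radialMoment hq₁ n x).differentiableAt, by simp, ?_⟩
    rw [hderiv]
    exact ih (hq.iterate_deriv 1) (n + 1)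

lemma radialMoment_apply_zero (q : ℝ → ℝ) (n : ℕ) : radialMoment q n 0 = q 0 / (n + 1) := by
  simp [radialMoment, integral_mul_const, integral_pow, div_eq_inv_mul]

lemma eq_pow_mul_radialMoment {f q : ℝ → ℝ} {n : ℕ} (hf₀ : f 0 = 0)
    (hf : ∀ x, HasDerivAt f (x ^ n * q x) x) (hq : Continuous q) (x : ℝ) :
    f x = x ^ (n + 1) * radialMoment q n x := by
  have hFTC : ∫ u in (0 : ℝ)..x, u ^ n * q u = f x := by
    rw [integral_eq_sub_of_hasDerivAt (fun u _ => hf u)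
      ((by fun_prop : Continuous fun u => u ^ n * q u).intervalIntegrable 0 x), hf₀, sub_zero]
  have hscale := smul_integral_comp_mul_left (fun u => u ^ n * q u) x (a := 0) (b := 1)
  simp only [mul_zero, mul_one, smul_eq_mul] at hscale
  rw [← hFTC, ← hscale, radialMoment, ← integral_const_mul, ← integral_const_mul]
  congr 1 with t
  ring

lemma hasDerivAt_erf (x : ℝ) : HasDerivAt erf (2 / √π * exp (-x ^ 2)) x :=
  ((by fun_prop : Continuous fun t : ℝ => exp (-t ^ 2)).integral_hasStrictDerivAt 0 x).hasDerivAt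
    |>.const_mul _

noncomputable def q₂ (x : ℝ) : ℝ := 16 / (3 * √π) * (x ^ 4 - 6 * x ^ 2 + 6) * exp (-x ^ 2)

lemma contDiff_q₂ : ContDiff ℝ ∞ q₂ := by
  unfold q₂
  fun_prop

lemma q₂_zero : q₂ 0 = 32 / √π := by
  rw [q₂]
  field_simp
  norm_num

lemma hasDerivAt_s₂ (x : ℝ) : HasDerivAt s₂ (x ^ 2 * q₂ x) x := by
  have hpoly :
      HasDerivAt (fun x : ℝ => 2 / 3 * x * (4 * x ^ 4 - 14 * x ^ 2 + 3) * exp (-x ^ 2) / √π)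
      (2 / 3 * (-8 * x ^ 6 + 48 * x ^ 4 - 48 * x ^ 2 + 3) * exp (-x ^ 2) / √π) x := by
    have h4 := ((hasDerivAt_pow 4 x).const_mul 4).sub ((hasDerivAt_pow 2 x).const_mul 14)
    have h := ((((hasDerivAt_id x).const_mul (2 / 3 : ℝ)).mul (h4.add_const 3)).mul
      (hasDerivAt_pow 2 x).neg.exp).div_const √π
    simp only [Pi.sub_apply, Pi.mul_apply, Pi.neg_apply, id_eq] at h
    exact h.congr_deriv (by push_cast; ring)
  have hπ : √π ≠ 0 := (sqrt_pos.2 pi_pos).ne'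
  refine ((hasDerivAt_erf x).sub hpoly).congr_deriv ?_
  unfold q₂
  field_simp
  ring

lemma s₂_zero : s₂ 0 = 0 := by simp [s₂, erf]

/-- s₂(r)/r³ extends to a C^∞ function on ℝ with value 32/(3√π) at the origin. -/
theorem s2_div_r3_smooth_extension :
    ∃ g : ℝ → ℝ, ContDiff ℝ (⊤ : ℕ∞) g ∧ (∀ r : ℝ, r ≠ 0 → g r = s₂ r / r ^ 3) ∧
      g 0 = 32 / (3 * Real.sqrt π) := by
  refine ⟨radialMoment q₂ 2, contDiff_radialMoment contDiff_q₂ 2, fun r hr => ?_, ?_⟩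
  · rw [eq_pow_mul_radialMoment s₂_zero hasDerivAt_s₂ contDiff_q₂.continuous r]
    field_simp
  · rw [radialMoment_apply_zero, q₂_zero]
    field_simp
    norm_num
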